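/- Let G=(V,E) be a weighted graph with boundary ∂=A⊔B⊔C and let n≥2 be an integer. There exists a subgraph G'=(V',E') of G with A,B⊆V' and an optimal solution (ρ,σ) of the integer program I such that: (1) there is a function k:V'→ℤ with 0≤k(x)≤2(n−1), k≡0 on A and k≡2(n−1) on B, satisfying σ(e)=|k(x)−k(y)| and ρ(e)=0 for every edge e={x,y}∈E'; and (2) letting (AB)'=V'∩V[μ(V')] be the vertices of V' incident to the cut surface μ(V'), G^c=((V∖V')∪(AB)', E∖E') the complementary reduced graph, and Γ_k={x∈(AB)' : k(x)=k} for k=0,…,2(n−1), the optimal value M of the ℓ-intersecting cut problem on G^c with ℓ=2(n−1), boundary sets Γ₀,…,Γ_ℓ and C, satisfies I ≥ M + w(μ(V')) + Σ_{e={x,y}∈E'} w(e)|k(x)−k(y)|. -/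

import Mathlib

open scoped Classical

noncomputable section

namespace RTN

/-! ## Set partitions -/

/-- Number of blocks of a set partition (as an integer). -/
def nb {α : Type*} (p : Setoid α) : ℤ := Nat.card (Quotient p)

/-- The partition distance `d(p,q) = #(p) + #(q) - 2 #(p ⊔ q)`. -/
def pdist {α : Type*} (p q : Setoid α) : ℤ := nb p + nb q - 2 * nb (p ⊔ q)

lemma pdist_comm {α : Type*} (p q : Setoid α) : pdist p q = pdist q p := by
  unfold pdist
  rw [sup_comm p q]
  ring

/-- `k` is a singlet (block of size one) of the partition `p`. -/
def IsSinglet {α : Type*} (p : Setoid α) (k : α) : Prop := ∀ y, p.r k y → y = k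

/-- The number of singlets `#₁(p)` of a partition. -/
def nS {α : Type*} (p : Setoid α) : ℤ := Nat.card {k : α // IsSinglet p k}

/-- The singlet distance `d₁(s₁,s₂) = #₁(s₁) + #₁(s₂) - 2 #₁(s₁ ⊔ s₂)`. -/
def sdist {α : Type*} (s₁ s₂ : Setoid α) : ℤ := nS s₁ + nS s₂ - 2 * nS (s₁ ⊔ s₂)

/-- The singlet pattern `s(p)`: the coarsest partition whose singlets are exactly
those of `p` (all non-singlet elements lie in one block). -/
def spat {α : Type*} (p : Setoid α) : Setoid α where
  r x y := x = y ∨ (¬ IsSinglet p x ∧ ¬ IsSinglet p y)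
  iseqv := by
    refine ⟨fun x => Or.inl rfl, ?_, ?_⟩
    · intro x y h
      rcases h with rfl | ⟨hx, hy⟩
      · exact Or.inl rfl
      · exact Or.inr ⟨hy, hx⟩
    · intro x y z h1 h2
      rcases h1 with rfl | ⟨hx, hy⟩
      · exact h2
      · rcases h2 with rfl | ⟨_, hz⟩
        · exact Or.inr ⟨hx, hy⟩
        · exact Or.inr ⟨hx, hz⟩

/-- The bit `b^k(p)`: `0` if `p` has a singlet at `k`, else `1`. -/
def bbit {α : Type*} (p : Setoid α) (k : α) : ℤ := if IsSinglet p k then 0 else 1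

/-- The size of the block of `p` containing `x`. -/
def blockSize {α : Type*} (p : Setoid α) (x : α) : ℕ := Nat.card {y : α // p.r x y}

noncomputable instance {α : Type*} [Finite α] (s : Setoid α) : Fintype (Quotient s) :=
  Fintype.ofFinite _

/-! ## Permutations -/

/-- The partition of `α` into orbits (cycles) of a permutation. -/
def orbitSetoid {α : Type*} (g : Equiv.Perm α) : Setoid α where
  r x y := ∃ k : ℤ, (g ^ k) x = y
  iseqv := by
    refine ⟨fun x => ⟨0, by simp⟩, ?_, ?_⟩
    · rintro x y ⟨k, rfl⟩
      exact ⟨-k, by simp [← Equiv.Perm.mul_apply, ← zpow_add]⟩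
    · rintro x y z ⟨k, rfl⟩ ⟨l, rfl⟩
      exact ⟨l + k, by rw [zpow_add, Equiv.Perm.mul_apply]⟩

/-- The number of cycles `#(g)` of a permutation (fixed points included). -/
def ncyc {α : Type*} (g : Equiv.Perm α) : ℤ := nb (orbitSetoid g)

/-- The Cayley distance `d(g,h) = N - #(g h⁻¹)`. -/
def cayley {α : Type*} [Fintype α] (g h : Equiv.Perm α) : ℤ :=
  (Fintype.card α : ℤ) - ncyc (g * h⁻¹)

lemma orbitSetoid_inv {α : Type*} (g : Equiv.Perm α) : orbitSetoid g⁻¹ = orbitSetoid g := by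
  apply Setoid.ext
  intro x y
  constructor
  · rintro ⟨k, hk⟩
    exact ⟨-k, by rw [← inv_zpow']; exact hk⟩
  · rintro ⟨k, hk⟩
    exact ⟨-k, by rw [inv_zpow', neg_neg]; exact hk⟩

lemma cayley_comm {α : Type*} [Fintype α] (g h : Equiv.Perm α) : cayley g h = cayley h g := by
  unfold cayley ncyc
  rw [show h * g⁻¹ = (g * h⁻¹)⁻¹ by rw [mul_inv_rev, inv_inv], orbitSetoid_inv]

/-- Coarse graining of a partition `p` by the blocks of `P(g₀)`: the partition of the set
of blocks of `P(g₀)` induced by `p ⊔ P(g₀)`. -/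
def coarse {α : Type*} (g₀ : Equiv.Perm α) (p : Setoid α) :
    Setoid (Quotient (orbitSetoid g₀)) where
  r u v := ∃ x y : α, Quotient.mk (orbitSetoid g₀) x = u ∧ Quotient.mk (orbitSetoid g₀) y = v ∧
    (p ⊔ orbitSetoid g₀).r x y
  iseqv := by
    refine ⟨?_, ?_, ?_⟩
    · intro u
      obtain ⟨x, rfl⟩ := Quotient.exists_rep u
      exact ⟨x, x, rfl, rfl, (p ⊔ orbitSetoid g₀).iseqv.refl x⟩
    · rintro u v ⟨x, y, hx, hy, hxy⟩
      exact ⟨y, x, hy, hx, (p ⊔ orbitSetoid g₀).iseqv.symm hxy⟩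
    · rintro u v w ⟨x, y, hx, hy, hxy⟩ ⟨y', z, hy', hz, hyz⟩
      refine ⟨x, z, hx, hz, ?_⟩
      have h1 : (orbitSetoid g₀).r y y' := Quotient.exact (hy.trans hy'.symm)
      have h2 : (p ⊔ orbitSetoid g₀).r y y' :=
        (le_sup_right : orbitSetoid g₀ ≤ p ⊔ orbitSetoid g₀) h1
      exact (p ⊔ orbitSetoid g₀).iseqv.trans hxy
        ((p ⊔ orbitSetoid g₀).iseqv.trans h2 hyz)

/-- The coarse graining `q_{g₀}(g) ∈ P_{#(g₀)}` of a permutation `g`. -/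
def qc {α : Type*} (g₀ g : Equiv.Perm α) : Setoid (Quotient (orbitSetoid g₀)) :=
  coarse g₀ (orbitSetoid g)

/-! ## Standard reflected-entropy boundary elements -/

/-- `g_B`, the product of `n` disjoint `m`-cycles `(k,ℓ) ↦ (k,ℓ+1)`. -/
def gB (n m : ℕ) : Equiv.Perm (Fin n × Fin m) :=
  Equiv.prodCongr (Equiv.refl (Fin n)) (finRotate m)

/-- `γ`, cyclically shifting `k ↦ k+1` on the elements with `ℓ` in the lower half,
fixing the rest. -/
def gamma (n m : ℕ) : Equiv.Perm (Fin n × Fin m) where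
  toFun x := if m / 2 ≤ (x.2 : ℕ) then (finRotate n x.1, x.2) else x
  invFun x := if m / 2 ≤ (x.2 : ℕ) then ((finRotate n).symm x.1, x.2) else x
  left_inv := by
    intro x
    by_cases h : m / 2 ≤ (x.2 : ℕ) <;> simp [h]
    rcases n with _ | n
    · exact x.1.elim0
    · simp
  right_inv := by
    intro x
    by_cases h : m / 2 ≤ (x.2 : ℕ) <;> simp [h]
    rcases n with _ | n
    · exact x.1.elim0
    · simp

/-- `g_A = γ⁻¹ g_B γ`. -/
def gA (n m : ℕ) : Equiv.Perm (Fin n × Fin m) :=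
  (gamma n m)⁻¹ * gB n m * gamma n m

/-- For even `m`, `Fin m` splits into an upper and a lower half. -/
def halfEquiv (m : ℕ) (hm : m % 2 = 0) : Fin 2 × Fin (m / 2) ≃ Fin m :=
  finProdFinEquiv.trans (finCongr (by omega))

/-- `X`, the product of the `2n` disjoint `(m/2)`-cycles cyclically permuting the
upper and the lower half of each block `k`. -/
def Xel (n m : ℕ) (hm : m % 2 = 0) : Equiv.Perm (Fin n × Fin m) :=
  Equiv.prodCongr (Equiv.refl (Fin n))
    ((halfEquiv m hm).permCongr
      (Equiv.prodCongr (Equiv.refl (Fin 2)) (finRotate (m / 2))))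

/-- The set of blocks of `P(X)`; it has `2n` elements. -/
abbrev BX (n m : ℕ) (hm : m % 2 = 0) := Quotient (orbitSetoid (Xel n m hm))

/-- `q_A = q_X(g_A) ∈ P_{2n}`. -/
def qAel (n m : ℕ) (hm : m % 2 = 0) : Setoid (BX n m hm) :=
  qc (Xel n m hm) (gA n m)

/-- `q_B = q_X(g_B) ∈ P_{2n}`. -/
def qBel (n m : ℕ) (hm : m % 2 = 0) : Setoid (BX n m hm) :=
  qc (Xel n m hm) (gB n m)

/-! ## Doubled elements (two copies) -/

/-- Two copies of the index set `{1,…,mn}`. -/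
abbrev DIdx (n m : ℕ) := (Fin n × Fin m) ⊕ (Fin n × Fin m)

/-- `g̃_A = g_A ⊕ g_A`. -/
def gAt (n m : ℕ) : Equiv.Perm (DIdx n m) := Equiv.sumCongr (gA n m) (gA n m)

/-- `g̃_B = g_B ⊕ g_B`. -/
def gBt (n m : ℕ) : Equiv.Perm (DIdx n m) := Equiv.sumCongr (gB n m) (gB n m)

/-- `X̃ = X ⊕ X`. -/
def Xt (n m : ℕ) (hm : m % 2 = 0) : Equiv.Perm (DIdx n m) :=
  Equiv.sumCongr (Xel n m hm) (Xel n m hm)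

/-- The set of blocks of `P(X̃)`; it has `4n` elements. -/
abbrev BXt (n m : ℕ) (hm : m % 2 = 0) := Quotient (orbitSetoid (Xt n m hm))

/-- `q̃_A = q_{X̃}(g̃_A) ∈ P_{4n}`. -/
def qAt (n m : ℕ) (hm : m % 2 = 0) : Setoid (BXt n m hm) :=
  qc (Xt n m hm) (gAt n m)

/-- `q̃_B = q_{X̃}(g̃_B) ∈ P_{4n}`. -/
def qBt (n m : ℕ) (hm : m % 2 = 0) : Setoid (BXt n m hm) :=
  qc (Xt n m hm) (gBt n m)

/-- A block of `P(X̃)` lies in the first copy. -/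
def inCopy1 {n m : ℕ} {hm : m % 2 = 0} (u : BXt n m hm) : Prop :=
  ∃ x, Quotient.mk (orbitSetoid (Xt n m hm)) (Sum.inl x) = u

/-- `#₁⁽¹⁾(q)`: the number of singlets of `q` among the first-copy positions. -/
def nS1 {n m : ℕ} {hm : m % 2 = 0} (q : Setoid (BXt n m hm)) : ℤ :=
  Nat.card {u : BXt n m hm // IsSinglet q u ∧ inCopy1 u}

/-- `#₁⁽²⁾(q)`: the number of singlets of `q` among the second-copy positions. -/
def nS2 {n m : ℕ} {hm : m % 2 = 0} (q : Setoid (BXt n m hm)) : ℤ :=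
  Nat.card {u : BXt n m hm // IsSinglet q u ∧ ¬ inCopy1 u}

/-- `τ ∈ P_{4n}`, the two-block partition separating the two copies. -/
def tau (n m : ℕ) (hm : m % 2 = 0) : Setoid (BXt n m hm) where
  r u v := inCopy1 u ↔ inCopy1 v
  iseqv := ⟨fun _ => Iff.rfl, Iff.symm, Iff.trans⟩

/-! ## Graphs, cuts and optimization programs -/

variable {V : Type*}

/-- Sum of an edge function along (the edge list of) a walk, with multiplicity. -/
def wkSum {β : Type*} [AddCommMonoid β] {G : SimpleGraph V} {x y : V}
    (f : Sym2 V → β) (L : G.Walk x y) : β :=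
  (L.edges.map f).sum

variable [Fintype V]

/-- Sum of an edge weight function over a set of edges. -/
def wsum (f : Sym2 V → ℝ) (S : Set (Sym2 V)) : ℝ :=
  ∑ e ∈ Finset.univ.filter (· ∈ S), f e

/-- The cut surface `μ(r)`: edges of `G` with one endpoint in `r`, the other outside. -/
def mu (G : SimpleGraph V) (r : Set V) : Set (Sym2 V) :=
  {e | e ∈ G.edgeSet ∧ ∃ x y, e = s(x, y) ∧ x ∈ r ∧ y ∉ r}

/-- `μ(r₁:r₂)`: edges of `G` with an endpoint in `r₁` and an endpoint in `r₂`. -/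
def mu2 (G : SimpleGraph V) (r₁ r₂ : Set V) : Set (Sym2 V) :=
  {e | e ∈ G.edgeSet ∧ ∃ x y, e = s(x, y) ∧ x ∈ r₁ ∧ y ∈ r₂}

/-- `r` is a cut for `X : Y`. -/
def IsCut (X Y r : Set V) : Prop := X ⊆ r ∧ Y ⊆ rᶜ

/-- The minimal cut area `𝒜(X:Y)`. -/
def minCut (G : SimpleGraph V) (w : Sym2 V → ℝ) (X Y : Set V) : ℝ :=
  sInf {a | ∃ r : Set V, IsCut X Y r ∧ a = wsum w (mu G r)}

/-- `(α,β,γ)` is a triway cut for `(A,B,C)`. -/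
def IsTriway (A B C α β γ : Set V) : Prop :=
  α ∪ β ∪ γ = Set.univ ∧ Disjoint α β ∧ Disjoint β γ ∧ Disjoint α γ ∧
    A ⊆ α ∧ B ⊆ β ∧ C ⊆ γ

/-- The area of a triway cut with tensions `(t_{A:B}, t_{B:C}, t_{C:A})`. -/
def triArea (G : SimpleGraph V) (w : Sym2 V → ℝ) (tAB tBC tCA : ℝ)
    (α β γ : Set V) : ℝ :=
  tAB * wsum w (mu2 G α β) + tBC * wsum w (mu2 G β γ) + tCA * wsum w (mu2 G γ α)

/-- The minimal triway cut area `𝒜_t(A:B:C)`. -/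
def triCut (G : SimpleGraph V) (w : Sym2 V → ℝ) (tAB tBC tCA : ℝ)
    (A B C : Set V) : ℝ :=
  sInf {a | ∃ α β γ : Set V, IsTriway A B C α β γ ∧ a = triArea G w tAB tBC tCA α β γ}

/-- Boundary data: `∂ = A ⊔ B ⊔ C` (pairwise disjoint). -/
def Bdy (A B C : Set V) : Prop := Disjoint A B ∧ Disjoint A C ∧ Disjoint B C

/-! ### The permutation optimization `R` -/

/-- The symmetric edge function induced by the Cayley distance of a vertex
configuration of permutations. -/
def permE {ι : Type*} [Fintype ι] (g : V → Equiv.Perm ι) : Sym2 V → ℝ :=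
  Sym2.lift ⟨fun x y => (cayley (g x) (g y) : ℝ),
    fun x y => congrArg Int.cast (cayley_comm (g x) (g y))⟩

/-- The free energy `R(g) = Σ_e w(e) d(g(x),g(y))`. -/
def Renergy {ι : Type*} [Fintype ι] (G : SimpleGraph V) (w : Sym2 V → ℝ)
    (g : V → Equiv.Perm ι) : ℝ :=
  wsum (fun e => w e * permE g e) G.edgeSet

/-- The optimal value `R` of the permutation optimization. -/
def Rval {ι : Type*} [Fintype ι] (G : SimpleGraph V) (w : Sym2 V → ℝ)
    (A B C : Set V) (g₁ g₂ : Equiv.Perm ι) : ℝ :=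
  sInf {a | ∃ g : V → Equiv.Perm ι,
    (∀ v ∈ A, g v = g₁) ∧ (∀ v ∈ B, g v = g₂) ∧ (∀ v ∈ C, g v = 1) ∧
    a = Renergy G w g}

/-! ### The set-partition optimization `Q` -/

/-- The symmetric integer edge function induced by the partition distance of a vertex
configuration of partitions. -/
def partEZ {κ : Type*} (q : V → Setoid κ) : Sym2 V → ℤ :=
  Sym2.lift ⟨fun x y => pdist (q x) (q y), fun x y => pdist_comm (q x) (q y)⟩

/-- The free energy `Q(q) = Σ_e w(e) d(q(x),q(y))`. -/
def Qenergy {κ : Type*} (G : SimpleGraph V) (w : Sym2 V → ℝ)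
    (q : V → Setoid κ) : ℝ :=
  wsum (fun e => w e * (partEZ q e : ℝ)) G.edgeSet

/-- The optimal value `Q` of the set-partition optimization. -/
def Qval {κ : Type*} (G : SimpleGraph V) (w : Sym2 V → ℝ)
    (A B C : Set V) (q₁ q₂ : Setoid κ) : ℝ :=
  sInf {a | ∃ q : V → Setoid κ,
    (∀ v ∈ A, q v = q₁) ∧ (∀ v ∈ B, q v = q₂) ∧ (∀ v ∈ C, q v = ⊥) ∧
    a = Qenergy G w q}

/-! ### The Boolean optimization `B` -/

/-- The Hamming distance between two bit strings. -/
def ham {κ : Type*} [Fintype κ] (b₁ b₂ : κ → Bool) : ℤ :=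
  ∑ k : κ, if b₁ k = b₂ k then 0 else 1

/-- The bit string `b(q)` of a partition: `false` exactly at singlets. -/
def bvec {κ : Type*} (p : Setoid κ) : κ → Bool :=
  fun u => if IsSinglet p u then false else true

/-- Feasibility of `r` for the Boolean program at configuration `b`. -/
def Bfeas {κ : Type*} [Fintype κ] (G : SimpleGraph V) (A B : Set V) (n : ℕ)
    (b : V → κ → Bool) (r : Sym2 V → ℕ) : Prop :=
  (∀ x ∈ A, ∀ y ∈ B, ∀ L : G.Walk x y,
    2 ∣ wkSum (fun e => (r e : ℤ)) L ∧
    wkSum (fun e => (r e : ℤ)) L ≥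
      2 * ((n : ℤ) - if ∀ v ∈ L.support, ∀ k, b v k = true then 1 else 0)) ∧
  (∀ x y : V, G.Adj x y → (r s(x, y) : ℤ) ≥ ⌈(ham (b x) (b y) : ℚ) / 2⌉)

/-- The inner Boolean optimum `B(b)` at a fixed Boolean configuration `b`. -/
def BvalAt {κ : Type*} [Fintype κ] (G : SimpleGraph V) (w : Sym2 V → ℝ)
    (A B : Set V) (n : ℕ) (b : V → κ → Bool) : ℝ :=
  sInf {a | ∃ r : Sym2 V → ℕ, Bfeas G A B n b r ∧
    a = wsum (fun e => w e * (r e : ℝ)) G.edgeSet}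

/-- The optimal value `B` of the Boolean optimization. -/
def Bval (κ : Type*) [Fintype κ] (G : SimpleGraph V) (w : Sym2 V → ℝ)
    (A B C : Set V) (n : ℕ) : ℝ :=
  sInf {a | ∃ b : V → κ → Bool,
    (∀ v ∈ A ∪ B, ∀ k, b v k = true) ∧ (∀ v ∈ C, ∀ k, b v k = false) ∧
    ∃ r : Sym2 V → ℕ, Bfeas G A B n b r ∧
      a = wsum (fun e => w e * (r e : ℝ)) G.edgeSet}

/-! ### The integer program `I` -/

/-- Feasibility of `(ρ,σ)` for the integer program. -/
def IPfeas (G : SimpleGraph V) (A B C : Set V) (n : ℕ) (ρ σ : Sym2 V → ℕ) : Prop :=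
  (∀ x ∈ A, ∀ y ∈ B, ∀ L : G.Walk x y,
    2 ∣ wkSum (fun e => (σ e : ℤ) + (ρ e : ℤ)) L ∧
    wkSum (fun e => (σ e : ℤ) + (ρ e : ℤ)) L ≥
      2 * ((n : ℤ) - if wkSum (fun e => (ρ e : ℤ)) L = 0 then 1 else 0)) ∧
  (∀ x ∈ A ∪ B, ∀ y ∈ C, ∀ L : G.Walk x y,
    wkSum (fun e => (ρ e : ℤ)) L ≥ (n : ℤ))

/-- The objective of the integer program. -/
def IPobj (G : SimpleGraph V) (w : Sym2 V → ℝ) (ρ σ : Sym2 V → ℕ) : ℝ :=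
  wsum (fun e => w e * ((σ e : ℝ) + (ρ e : ℝ))) G.edgeSet

/-- The optimal value `I` of the integer program. -/
def Ival (G : SimpleGraph V) (w : Sym2 V → ℝ) (A B C : Set V) (n : ℕ) : ℝ :=
  sInf {a | ∃ ρ σ : Sym2 V → ℕ, IPfeas G A B C n ρ σ ∧ a = IPobj G w ρ σ}

/-! ### The ℓ-intersecting cut problem `M` -/

/-- Feasibility for the `ℓ`-intersecting cut problem with boundary sets
`Γ₀, …, Γ_ℓ` and `C`, for a half-integer valued `ϱ`. -/
def Mfeas (G : SimpleGraph V) (Γ : ℕ → Set V) (ℓ : ℕ) (C : Set V)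
    (ϱ : Sym2 V → ℚ) : Prop :=
  (∀ e, ∃ j : ℕ, ϱ e = (j : ℚ) / 2) ∧
  (∀ k k' : ℕ, k ≤ ℓ → k' ≤ ℓ → ∀ x ∈ Γ k, ∀ y ∈ Γ k', ∀ L : G.Walk x y,
    ∃ j : ℕ, wkSum ϱ L = |(k : ℚ) - (k' : ℚ)| + (j : ℚ)) ∧
  (∀ k : ℕ, k ≤ ℓ → ∀ x ∈ Γ k, ∀ y ∈ C, ∀ L : G.Walk x y,
    ∃ j : ℕ, wkSum ϱ L = (ℓ : ℚ) / 2 + (j : ℚ))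

/-- The objective of the `ℓ`-intersecting cut problem. -/
def Mobj (G : SimpleGraph V) (w : Sym2 V → ℝ) (ϱ : Sym2 V → ℚ) : ℝ :=
  wsum (fun e => w e * (ϱ e : ℝ)) G.edgeSet

/-- The optimal value `M` of the `ℓ`-intersecting cut problem. -/
def Mval (G : SimpleGraph V) (w : Sym2 V → ℝ) (Γ : ℕ → Set V) (ℓ : ℕ)
    (C : Set V) : ℝ :=
  sInf {a | ∃ ϱ : Sym2 V → ℚ, Mfeas G Γ ℓ C ϱ ∧ a = Mobj G w ϱ}

/-- The complementary reduced graph `G^c`: the edges of `G` not lying entirely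
inside `V'`. -/
def reducedGraph (G : SimpleGraph V) (V' : Set V) : SimpleGraph V where
  Adj x y := G.Adj x y ∧ ¬ (x ∈ V' ∧ y ∈ V')
  symm := by
    refine ⟨?_⟩
    intro x y h
    exact ⟨h.1.symm, fun hc => h.2 ⟨hc.2, hc.1⟩⟩
  loopless := by
    refine ⟨?_⟩
    intro x h
    exact G.loopless.irrefl x h.1

end RTN

/-!
Take an optimal `(ρ, σ)` and measure, with edge costs `c = σ + ρ`, the distances `d_A` and
`d_B` from `A` and from `B`. Feasibility makes every `A`–`B` walk have even `c`-length at
least `2(n - 1)`; the vertices with `d_A = 0`, `d_B = 0` or `d_A + d_B ≤ 2(n - 1)` form `V'`,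
and the height `k = min(d_A, 2(n - 1))` is `1`-Lipschitz for `c` and has the parity of `d_A`
on `V'`. A vertex just outside `V'` has `d_A + d_B ≥ 2n - 1`, so every excursion out of `V'`
and back costs at least the change of `k` plus two. Hence replacing `c` by `|k(x) - k(y)|`
(and `ρ` by `0`) on the edges inside `V'` keeps the `A`–`B` constraints and does not raise
the cost. The `C` constraints survive because `V'` is reached from `A ∪ B` by `ρ`-free walks,
so the last stretch of a walk from `C` into `V'` already carries `n` units of `ρ`. On `G^c`,
the costs `c` lowered by one on the cut surface `μ(V')` are feasible for the intersecting cut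
problem, and the objective splits into the three terms of the bound.
-/

namespace SimpleGraph.Walk

variable {V : Type*} {G : SimpleGraph V}

lemma exists_first_entry (S : Set V) {x y : V} (L : G.Walk x y) (hx : x ∉ S) (hy : y ∈ S) :
    ∃ (z v : V) (W : G.Walk x z) (h : G.Adj z v) (L' : G.Walk v y),
      v ∈ S ∧ (∀ t ∈ W.support, t ∉ S) ∧ L = W.append (cons h L') := by
  induction L with
  | nil => exact absurd hy hx
  | @cons x b y h L ih =>
    by_cases hb : b ∈ S
    · exact ⟨x, b, nil, h, L, hb, by simpa using hx, rfl⟩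
    · obtain ⟨z, v, W, h', L', hv, hW, rfl⟩ := ih hb hy
      exact ⟨z, v, cons h W, h', L', hv, by simpa [hx] using hW, rfl⟩

@[elab_as_elim]
theorem induction_on_excursions (S : Set V) {motive : ∀ x y : V, G.Walk x y → Prop}
    (nil : ∀ x, motive x x nil)
    (inside : ∀ x z y (h : G.Adj x z) (L : G.Walk z y), x ∈ S → z ∈ S → motive z y L →
      motive x y (cons h L))
    (excursion : ∀ x z z' v y (h : G.Adj x z) (W : G.Walk z z') (h' : G.Adj z' v)
      (L : G.Walk v y), x ∈ S → v ∈ S → (∀ t ∈ W.support, t ∉ S) → motive v y L →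
      motive x y (cons h (W.append (cons h' L))))
    {x y : V} (L : G.Walk x y) (hx : x ∈ S) (hy : y ∈ S) : motive x y L := by
  induction hN : L.length using Nat.strong_induction_on generalizing x with
  | _ N ih =>
  cases L with
  | nil => exact nil _
  | @cons _ z _ h L =>
    by_cases hz : z ∈ S
    · exact inside _ _ _ h L hx hz (ih _ (by simp [← hN]) L hz rfl)
    · obtain ⟨z', v, W, h', L', hv, hW, rfl⟩ := exists_first_entry S L hz hy
      exact excursion _ _ _ _ _ h W h' L' hx hv hW (ih _ (by simp [← hN]; omega) L' hv rfl)

lemma mem_compl_sym2_of_mem_edges {S : Set V} {x y : V} {W : G.Walk x y}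
    (hW : ∀ t ∈ W.support, t ∉ S) {e : Sym2 V} (he : e ∈ W.edges) : e ∈ Sᶜ.sym2 := by
  induction e using Sym2.ind with
  | _ a b => exact ⟨hW a (W.fst_mem_support_of_mem_edges he),
      hW b (W.snd_mem_support_of_mem_edges he)⟩

end SimpleGraph.Walk

lemma Set.notMem_sym2_of_mem_compl_sym2 {V : Type*} {S : Set V} {e : Sym2 V}
    (he : e ∈ Sᶜ.sym2) : e ∉ S.sym2 := by
  induction e using Sym2.ind with
  | _ a b => exact fun hab => he.1 hab.1

lemma Set.mem_sym2_iff_forall {V : Type*} {S : Set V} {e : Sym2 V} :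
    e ∈ S.sym2 ↔ ∀ v ∈ e, v ∈ S := by
  induction e using Sym2.ind with
  | _ x y => simp

namespace RTN

open SimpleGraph

variable {V : Type*} {G : SimpleGraph V}

section WalkSum

variable {β : Type*} [AddCommMonoid β] (f : Sym2 V → β)

@[simp] lemma wkSum_nil {x : V} : wkSum f (Walk.nil : G.Walk x x) = 0 := rfl

@[simp] lemma wkSum_cons {x y z : V} (h : G.Adj x y) (L : G.Walk y z) :
    wkSum f (Walk.cons h L) = f s(x, y) + wkSum f L := by
  simp [wkSum]

@[simp] lemma wkSum_append {x y z : V} (L : G.Walk x y) (L' : G.Walk y z) :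
    wkSum f (L.append L') = wkSum f L + wkSum f L' := by
  simp [wkSum]

@[simp] lemma wkSum_reverse {x y : V} (L : G.Walk x y) : wkSum f L.reverse = wkSum f L := by
  simp [wkSum, List.sum_reverse]

lemma wkSum_transfer {H : SimpleGraph V} {x y : V} (L : G.Walk x y)
    (hL : ∀ e ∈ L.edges, e ∈ H.edgeSet) : wkSum f (L.transfer H hL) = wkSum f L := by
  simp [wkSum, Walk.edges_transfer]

variable {f} in
lemma wkSum_congr {g : Sym2 V → β} {x y : V} {L : G.Walk x y}
    (h : ∀ e ∈ L.edges, f e = g e) : wkSum f L = wkSum g L :=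
  congrArg List.sum (List.map_congr_left h)

end WalkSum

lemma wkSum_mono {f g : Sym2 V → ℕ} (h : ∀ e, f e ≤ g e) {x y : V} (L : G.Walk x y) :
    wkSum f L ≤ wkSum g L :=
  List.sum_le_sum fun e _ => h e

lemma wkSum_natCast {R : Type*} [AddCommMonoidWithOne R] (f : Sym2 V → ℕ) {x y : V}
    (L : G.Walk x y) : wkSum (fun e => (f e : R)) L = ((wkSum f L : ℕ) : R) := by
  simp [wkSum, Nat.cast_list_sum, Function.comp_def]

lemma wkSum_const (m : ℕ) {x y : V} (L : G.Walk x y) :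
    wkSum (fun _ => m) L = m * L.length := by
  simp [wkSum, mul_comm]

section CostDist

def ReachableFrom (G : SimpleGraph V) (A : Set V) (x : V) : Prop := ∃ a ∈ A, G.Reachable a x

lemma ReachableFrom.of_mem {A : Set V} {a : V} (ha : a ∈ A) : ReachableFrom G A a :=
  ⟨a, ha, Reachable.refl a⟩

lemma ReachableFrom.trans {A : Set V} {x y : V} (h : ReachableFrom G A x)
    (hxy : G.Reachable x y) : ReachableFrom G A y :=
  let ⟨a, ha, hax⟩ := h
  ⟨a, ha, hax.trans hxy⟩

/-- The least `c`-length of a walk from `A` to `x`; it is `0` when `x` is not reachable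
from `A`. -/
def costDist (G : SimpleGraph V) (c : Sym2 V → ℕ) (A : Set V) (x : V) : ℕ :=
  sInf {m | ∃ a ∈ A, ∃ W : G.Walk a x, wkSum c W = m}

variable {c : Sym2 V → ℕ} {A : Set V}

lemma costDist_le {a x : V} (ha : a ∈ A) (W : G.Walk a x) : costDist G c A x ≤ wkSum c W :=
  Nat.sInf_le ⟨a, ha, W, rfl⟩

lemma ReachableFrom.exists_walk_wkSum_eq_costDist {x : V} (h : ReachableFrom G A x) :
    ∃ a ∈ A, ∃ W : G.Walk a x, wkSum c W = costDist G c A x :=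
  let ⟨a, ha, ⟨W⟩⟩ := h
  Nat.sInf_mem (s := {m | ∃ a ∈ A, ∃ W : G.Walk a x, wkSum c W = m}) ⟨_, a, ha, W, rfl⟩

lemma costDist_of_mem {a : V} (ha : a ∈ A) : costDist G c A a = 0 :=
  Nat.eq_zero_of_le_zero (costDist_le ha Walk.nil)

lemma ReachableFrom.costDist_le_add {x y : V} (h : ReachableFrom G A x) (W : G.Walk x y) :
    costDist G c A y ≤ costDist G c A x + wkSum c W := by
  obtain ⟨a, ha, P, hP⟩ := h.exists_walk_wkSum_eq_costDist (c := c)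
  simpa [hP] using costDist_le (c := c) ha (P.append W)

lemma ReachableFrom.costDist_le_add_of_adj {x y : V} (h : ReachableFrom G A x)
    (hxy : G.Adj x y) : costDist G c A y ≤ costDist G c A x + c s(x, y) := by
  simpa using h.costDist_le_add (c := c) (Walk.cons hxy Walk.nil)

end CostDist

section Height

def IsEvenSeparating (G : SimpleGraph V) (A B : Set V) (n : ℕ) (c : Sym2 V → ℕ) : Prop :=
  ∀ a ∈ A, ∀ b ∈ B, ∀ W : G.Walk a b, Even (wkSum c W) ∧ 2 * n ≤ wkSum c W + 2

/-- The vertex set `V'` of the subgraph. -/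
def core (G : SimpleGraph V) (c : Sym2 V → ℕ) (A B : Set V) (n : ℕ) : Set V :=
  {x | (ReachableFrom G A x ∧ costDist G c A x = 0) ∨
    (ReachableFrom G B x ∧ costDist G c B x = 0) ∨
    (ReachableFrom G A x ∧ ReachableFrom G B x ∧
      costDist G c A x + costDist G c B x + 2 ≤ 2 * n)}

def height (G : SimpleGraph V) (c : Sym2 V → ℕ) (A : Set V) (n : ℕ) (x : V) : ℕ :=
  if ReachableFrom G A x then min (costDist G c A x) (2 * (n - 1)) else 2 * (n - 1)

variable {c : Sym2 V → ℕ} {A B : Set V} {n : ℕ}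

lemma IsEvenSeparating.costDist_add (hc : IsEvenSeparating G A B n c) {x : V}
    (hA : ReachableFrom G A x) (hB : ReachableFrom G B x) :
    (costDist G c A x + costDist G c B x) % 2 = 0 ∧
      2 * n ≤ costDist G c A x + costDist G c B x + 2 := by
  obtain ⟨a, ha, P, hP⟩ := hA.exists_walk_wkSum_eq_costDist (c := c)
  obtain ⟨b, hb, Q, hQ⟩ := hB.exists_walk_wkSum_eq_costDist (c := c)
  simpa [hP, hQ, Nat.even_iff] using hc a ha b hb (P.append Q.reverse)

lemma mem_core_iff {x : V} (hA : ReachableFrom G A x) (hB : ReachableFrom G B x) :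
    x ∈ core G c A B n ↔ costDist G c A x = 0 ∨ costDist G c B x = 0 ∨
      costDist G c A x + costDist G c B x + 2 ≤ 2 * n := by
  simp [core, hA, hB]

lemma left_subset_core : A ⊆ core G c A B n :=
  fun _ ha => Or.inl ⟨.of_mem ha, costDist_of_mem ha⟩

lemma right_subset_core : B ⊆ core G c A B n :=
  fun _ hb => Or.inr (Or.inl ⟨.of_mem hb, costDist_of_mem hb⟩)

lemma height_le (x : V) : height G c A n x ≤ 2 * (n - 1) := by
  unfold height; split <;> omega

lemma height_of_reachableFrom {x : V} (hA : ReachableFrom G A x) :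
    height G c A n x = min (costDist G c A x) (2 * (n - 1)) := if_pos hA

lemma height_of_mem {a : V} (ha : a ∈ A) : height G c A n a = 0 := by
  simp [height_of_reachableFrom (.of_mem ha), costDist_of_mem ha]

lemma IsEvenSeparating.height_of_mem_right (hc : IsEvenSeparating G A B n c) {b : V}
    (hb : b ∈ B) : height G c A n b = 2 * (n - 1) := by
  unfold height
  split
  · next hA =>
    have := (hc.costDist_add hA (.of_mem hb)).2
    rw [costDist_of_mem hb] at this
    omega
  · rfl

lemma height_le_add_of_adj {x y : V} (hxy : G.Adj x y) :
    height G c A n y ≤ height G c A n x + c s(x, y) := by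
  by_cases hA : ReachableFrom G A x
  · have hAy : ReachableFrom G A y := hA.trans hxy.reachable
    have := hA.costDist_le_add_of_adj (c := c) hxy
    rw [height_of_reachableFrom hA, height_of_reachableFrom hAy]
    omega
  · have hAy : ¬ ReachableFrom G A y := fun h => hA (h.trans hxy.symm.reachable)
    simp [height, hA, hAy]

lemma one_le_cost_of_mem_core_of_notMem {x y : V} (hxy : G.Adj x y)
    (hx : x ∈ core G c A B n) (hy : y ∉ core G c A B n) : 1 ≤ c s(x, y) := by
  by_contra h0
  apply hy
  have step : ∀ {X : Set V}, ReachableFrom G X x →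
      ReachableFrom G X y ∧ costDist G c X y ≤ costDist G c X x := fun hX =>
    ⟨hX.trans hxy.reachable, by have := hX.costDist_le_add_of_adj (c := c) hxy; omega⟩
  rcases hx with ⟨hA, hd⟩ | ⟨hB, hd⟩ | ⟨hA, hB, hd⟩
  · exact Or.inl ⟨(step hA).1, by have := (step hA).2; omega⟩
  · exact Or.inr (Or.inl ⟨(step hB).1, by have := (step hB).2; omega⟩)
  · refine Or.inr (Or.inr ⟨(step hA).1, (step hB).1, ?_⟩)
    have := (step hA).2
    have := (step hB).2
    omega

lemma one_le_of_mem_mu_core {e : Sym2 V} (he : e ∈ mu G (core G c A B n)) : 1 ≤ c e := by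
  obtain ⟨h, x, y, rfl, hx, hy⟩ := he
  exact one_le_cost_of_mem_core_of_notMem h hx hy

lemma IsEvenSeparating.costDist_mod_two (hc : IsEvenSeparating G A B n c) {x : V}
    (hx : x ∈ core G c A B n) (hA : ReachableFrom G A x) (hB : ReachableFrom G B x) :
    costDist G c A x % 2 = height G c A n x % 2 ∧
      costDist G c B x % 2 = height G c A n x % 2 := by
  have := hc.costDist_add hA hB
  rw [mem_core_iff hA hB] at hx
  rw [height_of_reachableFrom hA]
  omega

lemma IsEvenSeparating.wkSum_add_height_mod_two (hc : IsEvenSeparating G A B n c) {x y : V}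
    (hx : x ∈ core G c A B n) (hy : y ∈ core G c A B n) (hA : ReachableFrom G A x)
    (hB : ReachableFrom G B x) (M : G.Walk x y) :
    (wkSum c M + height G c A n x + height G c A n y) % 2 = 0 := by
  obtain ⟨a, ha, P, hP⟩ := hA.exists_walk_wkSum_eq_costDist (c := c)
  have hBy : ReachableFrom G B y := hB.trans M.reachable
  obtain ⟨b, hb, Q, hQ⟩ := hBy.exists_walk_wkSum_eq_costDist (c := c)
  have hPQ := (hc a ha b hb (P.append (M.append Q.reverse))).1
  simp only [wkSum_append, wkSum_reverse, hP, hQ, Nat.even_iff] at hPQ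
  have := hc.costDist_mod_two hx hA hB
  have := hc.costDist_mod_two hy (hA.trans M.reachable) hBy
  omega

lemma height_eq_of_not_reachableFrom {x y : V} (hx : x ∈ core G c A B n)
    (hy : y ∈ core G c A B n) (hxy : G.Reachable x y)
    (h : ¬ (ReachableFrom G A x ∧ ReachableFrom G B x)) :
    height G c A n x = height G c A n y := by
  by_cases hA : ReachableFrom G A x
  · have hB : ¬ ReachableFrom G B x := fun hB => h ⟨hA, hB⟩
    have hBy : ¬ ReachableFrom G B y := fun hBy => hB (hBy.trans hxy.symm)
    have hAy := hA.trans hxy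
    simp only [core, hB, hBy, false_and, and_false, or_false, Set.mem_ofPred_eq] at hx hy
    rw [height_of_reachableFrom hA, height_of_reachableFrom hAy, hx.2, hy.2]
  · have hAy : ¬ ReachableFrom G A y := fun hAy => hA (hAy.trans hxy.symm)
    simp [height, hA, hAy]

/-- As `z' ∉ V'`, `2n - 1 ≤ d_A z' + d_B z' ≤ d_A u + d_B u' + (cost of the excursion)`, which
is the bound up to one; parity gives the rest. -/
lemma IsEvenSeparating.height_add_two_le_excursion (hc : IsEvenSeparating G A B n c)
    {u z z' u' : V} (hu : u ∈ core G c A B n) (hu' : u' ∈ core G c A B n) (h : G.Adj u z)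
    (W : G.Walk z z') (h' : G.Adj z' u') (hW : ∀ t ∈ W.support, t ∉ core G c A B n) :
    height G c A n u + 2 ≤ c s(u, z) + wkSum c W + c s(z', u') + height G c A n u' ∧
      height G c A n u' + 2 ≤ c s(u, z) + wkSum c W + c s(z', u') + height G c A n u := by
  have hz := hW z W.start_mem_support
  have hz' := hW z' W.end_mem_support
  have e₁ := one_le_cost_of_mem_core_of_notMem h hu hz
  have e₂ := one_le_cost_of_mem_core_of_notMem h'.symm hu' hz'
  rw [Sym2.eq_swap] at e₂
  have hM : G.Reachable u u' := (Walk.cons h (W.append (Walk.cons h' Walk.nil))).reachable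
  by_cases hAB : ReachableFrom G A u ∧ ReachableFrom G B u
  swap
  · have := height_eq_of_not_reachableFrom hu hu' hM hAB
    omega
  obtain ⟨hA, hB⟩ := hAB
  have bounds : ∀ {X : Set V}, ReachableFrom G X u →
      costDist G c X z ≤ costDist G c X u + c s(u, z) ∧
      costDist G c X z' ≤ costDist G c X u' + c s(z', u') ∧
      costDist G c X z' ≤ costDist G c X z + wkSum c W ∧
      costDist G c X z ≤ costDist G c X z' + wkSum c W := by
    intro X hX
    have hXz := hX.trans h.reachable
    refine ⟨hX.costDist_le_add_of_adj h, ?_, hXz.costDist_le_add W, ?_⟩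
    · simpa [Sym2.eq_swap] using (hX.trans hM).costDist_le_add_of_adj (c := c) h'.symm
    · simpa using (hXz.trans W.reachable).costDist_le_add (c := c) W.reverse
  have bA := bounds hA
  have bB := bounds hB
  have hz₀ := (mem_core_iff (hA.trans h.reachable) (hB.trans h.reachable)).not.mp hz
  have hz'₀ := (mem_core_iff (hA.trans (h.reachable.trans W.reachable))
    (hB.trans (h.reachable.trans W.reachable))).not.mp hz'
  have hu₀ := (mem_core_iff hA hB).mp hu
  have hu'₀ := (mem_core_iff (hA.trans hM) (hB.trans hM)).mp hu'
  have hpar := hc.wkSum_add_height_mod_two hu hu' hA hB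
    (Walk.cons h (W.append (Walk.cons h' Walk.nil)))
  simp only [wkSum_cons, wkSum_append, wkSum_nil] at hpar
  rw [height_of_reachableFrom hA, height_of_reachableFrom (hA.trans hM)] at hpar ⊢
  omega

end Height

section IntegerProgram

variable {A B C : Set V} {n : ℕ} {ρ σ : Sym2 V → ℕ}

lemma IPfeas_iff : IPfeas G A B C n ρ σ ↔
    (∀ a ∈ A, ∀ b ∈ B, ∀ W : G.Walk a b, Even (wkSum (σ + ρ) W) ∧
      2 * n ≤ wkSum (σ + ρ) W + 2 ∧ (wkSum ρ W ≠ 0 → 2 * n ≤ wkSum (σ + ρ) W)) ∧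
    (∀ x ∈ A ∪ B, ∀ y ∈ C, ∀ W : G.Walk x y, n ≤ wkSum ρ W) := by
  have hcast : (fun e => (σ e : ℤ) + (ρ e : ℤ)) = fun e => (((σ + ρ) e : ℕ) : ℤ) := by
    funext e; simp
  simp only [IPfeas, hcast, wkSum_natCast, even_iff_two_dvd, ← Int.natCast_dvd_natCast,
    Nat.cast_ofNat, ge_iff_le, Nat.cast_le, Nat.cast_eq_zero]
  refine and_congr (forall₄_congr fun a _ b _ => forall_congr' fun W => and_congr_right
    fun _ => ?_) Iff.rfl
  split <;> omega

lemma IPfeas.isEvenSeparating (hIP : IPfeas G A B C n ρ σ) :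
    IsEvenSeparating G A B n (σ + ρ) := fun a ha b hb W =>
  have h := (IPfeas_iff.mp hIP).1 a ha b hb W
  ⟨h.1, h.2.1⟩

lemma IPfeas_const (hbdy : Bdy A B C) : IPfeas G A B C n (fun _ => n) (fun _ => n) := by
  have hlen : ∀ {x y : V}, x ≠ y → ∀ L : G.Walk x y, 1 ≤ L.length := fun hxy L =>
    Nat.one_le_iff_ne_zero.mpr fun h => hxy (Walk.eq_of_length_eq_zero h)
  refine IPfeas_iff.mpr ⟨fun a ha b hb L => ?_, fun x hx y hy L => ?_⟩
  · have := hlen (by rintro rfl; exact Set.disjoint_left.mp hbdy.1 ha hb) L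
    have hnn : ((fun _ => n) + fun _ => n : Sym2 V → ℕ) = fun _ => 2 * n := by
      funext; simp [two_mul]
    rw [hnn, wkSum_const, wkSum_const]
    exact ⟨⟨n * L.length, by ring⟩, by nlinarith, fun _ => by nlinarith⟩
  · have hxy : x ≠ y := by
      rintro rfl
      rcases hx with hx | hx
      exacts [Set.disjoint_left.mp hbdy.2.1 hx hy, Set.disjoint_left.mp hbdy.2.2 hx hy]
    rw [wkSum_const]
    nlinarith [hlen hxy L]

lemma IPfeas.exists_walk_wkSum_rho_eq_zero (hIP : IPfeas G A B C n ρ σ) {x : V}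
    (hx : x ∈ core G (σ + ρ) A B n) : ∃ s ∈ A ∪ B, ∃ W : G.Walk s x, wkSum ρ W = 0 := by
  have hρ : ∀ {y z : V} (W : G.Walk y z), wkSum ρ W ≤ wkSum (σ + ρ) W :=
    wkSum_mono fun e => Nat.le_add_left (ρ e) (σ e)
  rcases hx with ⟨hA, hd⟩ | ⟨hB, hd⟩ | ⟨hA, hB, hd⟩
  · obtain ⟨a, ha, P, hP⟩ := hA.exists_walk_wkSum_eq_costDist (c := σ + ρ)
    exact ⟨a, .inl ha, P, by have := hρ P; omega⟩
  · obtain ⟨b, hb, Q, hQ⟩ := hB.exists_walk_wkSum_eq_costDist (c := σ + ρ)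
    exact ⟨b, .inr hb, Q, by have := hρ Q; omega⟩
  · obtain ⟨a, ha, P, hP⟩ := hA.exists_walk_wkSum_eq_costDist (c := σ + ρ)
    obtain ⟨b, hb, Q, hQ⟩ := hB.exists_walk_wkSum_eq_costDist (c := σ + ρ)
    refine ⟨a, .inl ha, P, by_contra fun hPρ => ?_⟩
    have := ((IPfeas_iff.mp hIP).1 a ha b hb (P.append Q.reverse)).2.2
    simp only [wkSum_append, wkSum_reverse, hP, hQ] at this
    omega

lemma IPfeas.notMem_core (hIP : IPfeas G A B C n ρ σ) (hn : 1 ≤ n) {y : V} (hy : y ∈ C) :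
    y ∉ core G (σ + ρ) A B n := fun hcore => by
  obtain ⟨s, hs, W, hW⟩ := hIP.exists_walk_wkSum_rho_eq_zero hcore
  have := (IPfeas_iff.mp hIP).2 s hs y hy W
  omega

lemma IPfeas.le_wkSum_rho_add (hIP : IPfeas G A B C n ρ σ) {y z v : V} (hy : y ∈ C)
    (W : G.Walk y z) (h : G.Adj z v) (hv : v ∈ core G (σ + ρ) A B n) :
    n ≤ wkSum ρ W + ρ s(z, v) := by
  obtain ⟨s, hs, Z, hZ⟩ := hIP.exists_walk_wkSum_rho_eq_zero hv
  have := (IPfeas_iff.mp hIP).2 s hs y hy (Z.append (Walk.cons h.symm W.reverse))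
  simp only [wkSum_append, wkSum_cons, wkSum_reverse, hZ, Sym2.eq_swap (a := v)] at this
  omega

end IntegerProgram

def heightDiff (G : SimpleGraph V) (c : Sym2 V → ℕ) (A : Set V) (n : ℕ) : Sym2 V → ℕ :=
  Sym2.lift ⟨fun x y => ((height G c A n x : ℤ) - height G c A n y).natAbs,
    fun x y => by dsimp only; omega⟩

def heightSigma (G : SimpleGraph V) (A B : Set V) (n : ℕ) (ρ σ : Sym2 V → ℕ) : Sym2 V → ℕ :=
  fun e => if e ∈ (core G (σ + ρ) A B n).sym2 then heightDiff G (σ + ρ) A n e else σ e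

def heightRho (G : SimpleGraph V) (A B : Set V) (n : ℕ) (ρ σ : Sym2 V → ℕ) : Sym2 V → ℕ :=
  fun e => if e ∈ (core G (σ + ρ) A B n).sym2 then 0 else ρ e

section HeightSolution

variable {A B C : Set V} {n : ℕ} {ρ σ : Sym2 V → ℕ}

lemma heightSigma_add_heightRho_of_notMem {e : Sym2 V}
    (he : e ∉ (core G (σ + ρ) A B n).sym2) :
    (heightSigma G A B n ρ σ + heightRho G A B n ρ σ) e = (σ + ρ) e := by
  simp [heightSigma, heightRho, he]

lemma heightSigma_add_heightRho_of_mem {x y : V}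
    (hxy : s(x, y) ∈ (core G (σ + ρ) A B n).sym2) :
    (heightSigma G A B n ρ σ + heightRho G A B n ρ σ) s(x, y) =
      ((height G (σ + ρ) A n x : ℤ) - height G (σ + ρ) A n y).natAbs := by
  simp [heightSigma, heightRho, hxy, heightDiff]

lemma IPfeas.height_le_wkSum_heightSolution (hIP : IPfeas G A B C n ρ σ) {x y : V}
    (L : G.Walk x y) (hx : x ∈ core G (σ + ρ) A B n) (hy : y ∈ core G (σ + ρ) A B n)
    (hA : ReachableFrom G A x) (hB : ReachableFrom G B x) :
    (wkSum (heightSigma G A B n ρ σ + heightRho G A B n ρ σ) L +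
        height G (σ + ρ) A n x + height G (σ + ρ) A n y) % 2 = 0 ∧
      height G (σ + ρ) A n x ≤
        wkSum (heightSigma G A B n ρ σ + heightRho G A B n ρ σ) L + height G (σ + ρ) A n y ∧
      height G (σ + ρ) A n y ≤
        wkSum (heightSigma G A B n ρ σ + heightRho G A B n ρ σ) L + height G (σ + ρ) A n x ∧
      (wkSum (heightRho G A B n ρ σ) L ≠ 0 →
        height G (σ + ρ) A n x + 2 ≤
          wkSum (heightSigma G A B n ρ σ + heightRho G A B n ρ σ) L +
            height G (σ + ρ) A n y ∧
        height G (σ + ρ) A n y + 2 ≤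
          wkSum (heightSigma G A B n ρ σ + heightRho G A B n ρ σ) L +
            height G (σ + ρ) A n x) := by
  have hc := hIP.isEvenSeparating
  revert hA hB
  refine Walk.induction_on_excursions _ (fun x _ _ => by simp; omega) ?_ ?_ L hx hy
  · intro x z y h L hx hz ih hA hB
    have hxz : s(x, z) ∈ (core G (σ + ρ) A B n).sym2 := ⟨hx, hz⟩
    have hρ : heightRho G A B n ρ σ s(x, z) = 0 := by simp [heightRho, hxz]
    have := heightSigma_add_heightRho_of_mem hxz
    obtain ⟨h₁, h₂, h₃, h₄⟩ := ih (hA.trans h.reachable) (hB.trans h.reachable)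
    simp only [wkSum_cons, hρ, zero_add]
    refine ⟨by omega, by omega, by omega, fun hL => ?_⟩
    have := h₄ hL
    omega
  · intro x z z' v y h W h' L hx hv hW ih hA hB
    have e₁ := heightSigma_add_heightRho_of_notMem (G := G) (ρ := ρ) (σ := σ) (A := A)
      (B := B) (n := n) (e := s(x, z)) fun hxz => hW z W.start_mem_support hxz.2
    have e₂ := heightSigma_add_heightRho_of_notMem (G := G) (ρ := ρ) (σ := σ) (A := A)
      (B := B) (n := n) (e := s(z', v)) fun hzv => hW z' W.end_mem_support hzv.1
    have eW : wkSum (heightSigma G A B n ρ σ + heightRho G A B n ρ σ) W = wkSum (σ + ρ) W :=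
      wkSum_congr fun e he => heightSigma_add_heightRho_of_notMem
        (Set.notMem_sym2_of_mem_compl_sym2 (Walk.mem_compl_sym2_of_mem_edges hW he))
    have hM : G.Reachable x v := (Walk.cons h (W.append (Walk.cons h' Walk.nil))).reachable
    have hbound := hc.height_add_two_le_excursion hx hv h W h' hW
    have hpar := hc.wkSum_add_height_mod_two hx hv hA hB
      (Walk.cons h (W.append (Walk.cons h' Walk.nil)))
    simp only [wkSum_cons, wkSum_append, wkSum_nil] at hpar
    obtain ⟨h₁, h₂, h₃, -⟩ := ih (hA.trans hM) (hB.trans hM)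
    simp only [wkSum_cons, wkSum_append, e₁, e₂, eW]
    exact ⟨by omega, by omega, by omega, fun _ => ⟨by omega, by omega⟩⟩

lemma IPfeas.heightSolution (hIP : IPfeas G A B C n ρ σ) (hn : 1 ≤ n) :
    IPfeas G A B C n (heightRho G A B n ρ σ) (heightSigma G A B n ρ σ) := by
  refine IPfeas_iff.mpr ⟨fun a ha b hb L => ?_, fun x hx y hy L => ?_⟩
  · obtain ⟨h₁, -, h₃, h₄⟩ := hIP.height_le_wkSum_heightSolution L (left_subset_core ha)
      (right_subset_core hb) (.of_mem ha) ⟨b, hb, L.reverse.reachable⟩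
    rw [height_of_mem ha, hIP.isEvenSeparating.height_of_mem_right hb] at h₁ h₃ h₄
    exact ⟨Nat.even_iff.mpr (by omega), by omega, fun hL => by have := h₄ hL; omega⟩
  · obtain ⟨z, v, W, h, L', hv, hW, hL⟩ := Walk.exists_first_entry _ L.reverse
      (hIP.notMem_core hn hy) (hx.elim (left_subset_core ·) (right_subset_core ·))
    have hWρ : wkSum (heightRho G A B n ρ σ) W = wkSum ρ W :=
      wkSum_congr fun e he =>
        if_neg (Set.notMem_sym2_of_mem_compl_sym2 (Walk.mem_compl_sym2_of_mem_edges hW he))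
    have hzv : heightRho G A B n ρ σ s(z, v) = ρ s(z, v) :=
      if_neg fun hzv => hW z W.end_mem_support hzv.1
    have := hIP.le_wkSum_rho_add hy W h hv
    rw [← wkSum_reverse, hL]
    simp only [wkSum_append, wkSum_cons, hWρ, hzv]
    omega

lemma heightSolution_le {e : Sym2 V} (he : e ∈ G.edgeSet) :
    (heightSigma G A B n ρ σ + heightRho G A B n ρ σ) e ≤ (σ + ρ) e := by
  induction e using Sym2.ind with
  | _ x y =>
  by_cases hxy : s(x, y) ∈ (core G (σ + ρ) A B n).sym2
  · have hadj : G.Adj x y := he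
    have h₁ := height_le_add_of_adj (c := σ + ρ) (A := A) (n := n) hadj
    have h₂ := height_le_add_of_adj (c := σ + ρ) (A := A) (n := n) hadj.symm
    rw [Sym2.eq_swap] at h₂
    rw [heightSigma_add_heightRho_of_mem hxy]
    omega
  · exact (heightSigma_add_heightRho_of_notMem hxy).le

end HeightSolution

/-- The candidate `ϱ` for the cut problem on `G^c`. -/
def cutCost (G : SimpleGraph V) (c : Sym2 V → ℕ) (S : Set V) : Sym2 V → ℕ :=
  fun e => c e - if e ∈ mu G S then 1 else 0

section CutProblem

lemma mem_mu_of_adj {S : Set V} {x y : V} (h : G.Adj x y) (hx : x ∈ S) (hy : y ∉ S) :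
    s(x, y) ∈ mu G S :=
  ⟨h, x, y, rfl, hx, hy⟩

lemma notMem_mu_of_mem_compl_sym2 {S : Set V} {e : Sym2 V} (he : e ∈ Sᶜ.sym2) :
    e ∉ mu G S := by
  rintro ⟨-, a, b, rfl, ha, -⟩
  exact he.1 ha

lemma mem_edgeSet_reducedGraph {S : Set V} {e : Sym2 V} :
    e ∈ (reducedGraph G S).edgeSet ↔ e ∈ G.edgeSet ∧ e ∉ S.sym2 := by
  induction e using Sym2.ind with
  | _ x y => exact Iff.rfl

lemma mu_subset_edgeSet_reducedGraph (S : Set V) : mu G S ⊆ (reducedGraph G S).edgeSet := by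
  rintro _ ⟨he, x, y, rfl, -, hy⟩
  exact mem_edgeSet_reducedGraph.mpr ⟨he, fun hxy => hy hxy.2⟩

lemma cutCost_of_mem_compl_sym2 {c : Sym2 V → ℕ} {S : Set V} {e : Sym2 V}
    (he : e ∈ Sᶜ.sym2) : cutCost G c S e = c e := by
  simp [cutCost, notMem_mu_of_mem_compl_sym2 he]

variable {c : Sym2 V → ℕ} {A B : Set V} {n : ℕ}

lemma cutCost_add_one {e : Sym2 V} (he : e ∈ mu G (core G c A B n)) :
    cutCost G c (core G c A B n) e + 1 = c e := by
  have := one_le_of_mem_mu_core he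
  simp only [cutCost, he, if_true]
  omega

lemma IsEvenSeparating.height_le_wkSum_cutCost (hc : IsEvenSeparating G A B n c) {x y : V}
    (L : G.Walk x y) (hx : x ∈ core G c A B n) (hy : y ∈ core G c A B n)
    (hL : ∀ e ∈ L.edges, e ∉ (core G c A B n).sym2) :
    height G c A n x ≤ wkSum (cutCost G c (core G c A B n)) L + height G c A n y ∧
      height G c A n y ≤ wkSum (cutCost G c (core G c A B n)) L + height G c A n x := by
  revert hL
  refine Walk.induction_on_excursions _ (fun x _ => by simp) ?_ ?_ L hx hy
  · intro x z y h L hx hz _ hL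
    exact absurd (show s(x, z) ∈ (core G c A B n).sym2 from ⟨hx, hz⟩) (hL _ (by simp))
  · intro x z z' v y h W h' L hx hv hW ih hL
    have e₁ := cutCost_add_one (mem_mu_of_adj h hx (hW z W.start_mem_support))
    have e₂ := cutCost_add_one (mem_mu_of_adj h'.symm hv (hW z' W.end_mem_support))
    rw [Sym2.eq_swap] at e₂
    have eW : wkSum (cutCost G c (core G c A B n)) W = wkSum c W :=
      wkSum_congr fun e he => cutCost_of_mem_compl_sym2 (Walk.mem_compl_sym2_of_mem_edges hW he)
    have hbound := hc.height_add_two_le_excursion hx hv h W h' hW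
    obtain ⟨h₁, h₂⟩ := ih fun e he => hL e (by simp [he])
    simp only [wkSum_cons, wkSum_append, eW]
    omega

lemma exists_natCast_eq_abs_sub_add {s k k' : ℕ} (h₁ : k ≤ s + k') (h₂ : k' ≤ s + k) :
    ∃ j : ℕ, (s : ℚ) = |(k : ℚ) - k'| + j := by
  rcases le_total k k' with h | h
  · refine ⟨s + k - k', ?_⟩
    rw [abs_of_nonpos (sub_nonpos.mpr (by exact_mod_cast h)), Nat.cast_sub h₂]
    push_cast; ring
  · refine ⟨s + k' - k, ?_⟩
    rw [abs_of_nonneg (sub_nonneg.mpr (by exact_mod_cast h)), Nat.cast_sub h₁]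
    push_cast; ring

variable {C : Set V} {ρ σ : Sym2 V → ℕ}

lemma IPfeas.le_wkSum_cutCost_add_one (hIP : IPfeas G A B C n ρ σ) (hn : 1 ≤ n) {x y : V}
    (L : G.Walk x y) (hx : x ∈ core G (σ + ρ) A B n) (hy : y ∈ C) :
    n ≤ wkSum (cutCost G (σ + ρ) (core G (σ + ρ) A B n)) L + 1 := by
  obtain ⟨z, v, W, h, L', hv, hW, hL⟩ :=
    Walk.exists_first_entry _ L.reverse (hIP.notMem_core hn hy) hx
  have eW : wkSum (cutCost G (σ + ρ) (core G (σ + ρ) A B n)) W = wkSum (σ + ρ) W :=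
    wkSum_congr fun e he => cutCost_of_mem_compl_sym2 (Walk.mem_compl_sym2_of_mem_edges hW he)
  have hρW : wkSum ρ W ≤ wkSum (σ + ρ) W := wkSum_mono (fun e => Nat.le_add_left _ _) W
  have hzv : ρ s(z, v) ≤ cutCost G (σ + ρ) (core G (σ + ρ) A B n) s(z, v) + 1 := by
    unfold cutCost
    split <;> simp only [Pi.add_apply] <;> omega
  have := hIP.le_wkSum_rho_add hy W h hv
  rw [← wkSum_reverse, hL]
  simp only [wkSum_append, wkSum_cons, eW]
  omega

lemma IPfeas.mfeas_cutCost (hIP : IPfeas G A B C n ρ σ) (hn : 1 ≤ n) {Γ : ℕ → Set V}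
    (hΓ : ∀ k, ∀ x ∈ Γ k, x ∈ core G (σ + ρ) A B n ∧ height G (σ + ρ) A n x = k) :
    Mfeas (reducedGraph G (core G (σ + ρ) A B n)) Γ (2 * (n - 1)) C
      (fun e => (cutCost G (σ + ρ) (core G (σ + ρ) A B n) e : ℚ)) := by
  have toG : ∀ {x y : V} (L : (reducedGraph G (core G (σ + ρ) A B n)).Walk x y),
      ∀ e ∈ L.edges, e ∈ G.edgeSet ∧ e ∉ (core G (σ + ρ) A B n).sym2 :=
    fun L e he => mem_edgeSet_reducedGraph.mp (L.edges_subset_edgeSet he)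
  refine ⟨fun e => ⟨2 * cutCost G (σ + ρ) (core G (σ + ρ) A B n) e, by push_cast; ring⟩,
    fun k k' _ _ x hx y hy L => ?_, fun k _ x hx y hy L => ?_⟩
  · obtain ⟨hxS, rfl⟩ := hΓ k x hx
    obtain ⟨hyS, rfl⟩ := hΓ k' y hy
    have := hIP.isEvenSeparating.height_le_wkSum_cutCost
      (L.transfer G fun e he => (toG L e he).1) hxS hyS
      fun e he => (toG L e (by rwa [Walk.edges_transfer] at he)).2
    rw [wkSum_transfer] at this
    rw [wkSum_natCast]
    exact exists_natCast_eq_abs_sub_add this.1 this.2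
  · have := hIP.le_wkSum_cutCost_add_one hn (L.transfer G fun e he => (toG L e he).1)
      (hΓ k x hx).1 hy
    rw [wkSum_transfer] at this
    rw [wkSum_natCast]
    refine ⟨wkSum (cutCost G (σ + ρ) (core G (σ + ρ) A B n)) L - (n - 1), ?_⟩
    rw [Nat.cast_sub (by omega), Nat.cast_mul]
    push_cast
    ring

end CutProblem

section Objective

variable [Fintype V]

lemma wsum_congr {f g : Sym2 V → ℝ} {S : Set (Sym2 V)} (h : ∀ e ∈ S, f e = g e) :
    wsum f S = wsum g S :=
  Finset.sum_congr rfl fun e he => h e (Finset.mem_filter.mp he).2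

lemma wsum_le_wsum {f g : Sym2 V → ℝ} {S : Set (Sym2 V)} (h : ∀ e ∈ S, f e ≤ g e) :
    wsum f S ≤ wsum g S :=
  Finset.sum_le_sum fun e he => h e (Finset.mem_filter.mp he).2

lemma wsum_nonneg {f : Sym2 V → ℝ} {S : Set (Sym2 V)} (h : ∀ e ∈ S, 0 ≤ f e) :
    0 ≤ wsum f S :=
  Finset.sum_nonneg fun e he => h e (Finset.mem_filter.mp he).2

lemma wsum_add (f g : Sym2 V → ℝ) (S : Set (Sym2 V)) :
    wsum (fun e => f e + g e) S = wsum f S + wsum g S :=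
  Finset.sum_add_distrib

lemma wsum_union (f : Sym2 V → ℝ) {S T : Set (Sym2 V)} (h : Disjoint S T) :
    wsum f (S ∪ T) = wsum f S + wsum f T := by
  unfold wsum
  rw [← Finset.sum_union]
  · congr 1
    ext e
    simp
  · exact Finset.disjoint_filter.mpr fun e _ hS hT => Set.disjoint_left.mp h hS hT

lemma wsum_ite_mem (f : Sym2 V → ℝ) {S T : Set (Sym2 V)} (h : T ⊆ S) :
    wsum (fun e => if e ∈ T then f e else 0) S = wsum f T := by
  unfold wsum
  rw [← Finset.sum_filter, Finset.filter_filter]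
  congr 1
  ext e
  simp only [Finset.mem_filter, Finset.mem_univ, true_and]
  exact ⟨And.right, fun he => ⟨h he, he⟩⟩

variable {w : Sym2 V → ℝ} {A B C : Set V} {n : ℕ} {ρ σ : Sym2 V → ℕ}

lemma IPobj_nonneg (hw : ∀ e, 0 ≤ w e) (ρ σ : Sym2 V → ℕ) : 0 ≤ IPobj G w ρ σ :=
  wsum_nonneg fun e _ => mul_nonneg (hw e) (by positivity)

lemma Ival_le_IPobj (hw : ∀ e, 0 ≤ w e) (h : IPfeas G A B C n ρ σ) :
    Ival G w A B C n ≤ IPobj G w ρ σ :=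
  csInf_le ⟨0, by rintro _ ⟨ρ, σ, -, rfl⟩; exact IPobj_nonneg hw ρ σ⟩ ⟨ρ, σ, h, rfl⟩

lemma IPobj_mem_closure (ρ σ : Sym2 V → ℕ) :
    IPobj G w ρ σ ∈ AddSubmonoid.closure (Set.range w) :=
  AddSubmonoid.sum_mem _ fun e _ => by
    rw [show w e * ((σ e : ℝ) + ρ e) = (σ e + ρ e) • w e by push_cast [nsmul_eq_mul]; ring]
    exact AddSubmonoid.nsmul_mem _ (AddSubmonoid.subset_closure (Set.mem_range_self e)) _

/-- The objective values are well ordered, being sums of natural multiples of finitely many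
nonnegative weights. -/
lemma exists_IPobj_eq_Ival (hw : ∀ e, 0 ≤ w e) (hbdy : Bdy A B C) :
    ∃ ρ σ : Sym2 V → ℕ, IPfeas G A B C n ρ σ ∧ IPobj G w ρ σ = Ival G w A B C n := by
  have hwf : Set.IsWF {a | ∃ ρ σ : Sym2 V → ℕ, IPfeas G A B C n ρ σ ∧ a = IPobj G w ρ σ} :=
    ((Set.finite_range w).isPWO.addSubmonoid_closure (by rintro _ ⟨e, rfl⟩; exact hw e)).isWF.mono
      (by rintro _ ⟨ρ, σ, -, rfl⟩; exact IPobj_mem_closure ρ σ)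
  have hne : Set.Nonempty {a | ∃ ρ σ : Sym2 V → ℕ, IPfeas G A B C n ρ σ ∧ a = IPobj G w ρ σ} :=
    ⟨_, _, _, IPfeas_const hbdy, rfl⟩
  obtain ⟨ρ, σ, h, heq⟩ := hwf.min_mem hne
  refine ⟨ρ, σ, h, ?_⟩
  rw [← heq]
  exact (IsLeast.csInf_eq ⟨hwf.min_mem hne, fun a ha => hwf.min_le hne ha⟩).symm

lemma Mval_le_Mobj (hw : ∀ e, 0 ≤ w e) {H : SimpleGraph V} {Γ : ℕ → Set V} {ℓ : ℕ}
    {ϱ : Sym2 V → ℚ} (h : Mfeas H Γ ℓ C ϱ) : Mval H w Γ ℓ C ≤ Mobj H w ϱ := by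
  refine csInf_le ⟨0, ?_⟩ ⟨ϱ, h, rfl⟩
  rintro _ ⟨ϱ', h', rfl⟩
  refine wsum_nonneg fun e _ => mul_nonneg (hw e) ?_
  obtain ⟨j, hj⟩ := h'.1 e
  rw [hj]
  positivity

lemma IPobj_heightSolution_le (hw : ∀ e, 0 ≤ w e) :
    IPobj G w (heightRho G A B n ρ σ) (heightSigma G A B n ρ σ) ≤ IPobj G w ρ σ :=
  wsum_le_wsum fun e he => mul_le_mul_of_nonneg_left (by
    have := heightSolution_le (A := A) (B := B) (n := n) (ρ := ρ) (σ := σ) he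
    simp only [Pi.add_apply] at this
    exact_mod_cast this) (hw e)

lemma IPobj_heightSolution (w : Sym2 V → ℝ) :
    IPobj G w (heightRho G A B n ρ σ) (heightSigma G A B n ρ σ) =
      wsum (fun e => w e * Sym2.lift ⟨fun x y => |((height G (σ + ρ) A n x : ℤ) : ℝ) -
          ((height G (σ + ρ) A n y : ℤ) : ℝ)|, fun _ _ => abs_sub_comm _ _⟩ e)
          {e | e ∈ G.edgeSet ∧ ∀ v ∈ e, v ∈ core G (σ + ρ) A B n} +
        (Mobj (reducedGraph G (core G (σ + ρ) A B n)) w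
          (fun e => (cutCost G (σ + ρ) (core G (σ + ρ) A B n) e : ℚ)) +
        wsum w (mu G (core G (σ + ρ) A B n))) := by
  have hsplit : G.edgeSet =
      {e | e ∈ G.edgeSet ∧ ∀ v ∈ e, v ∈ core G (σ + ρ) A B n} ∪
        (reducedGraph G (core G (σ + ρ) A B n)).edgeSet := by
    ext e
    simp only [Set.mem_union, Set.mem_ofPred_eq, mem_edgeSet_reducedGraph,
      Set.mem_sym2_iff_forall]
    tauto
  have hdisj : Disjoint {e | e ∈ G.edgeSet ∧ ∀ v ∈ e, v ∈ core G (σ + ρ) A B n}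
      (reducedGraph G (core G (σ + ρ) A B n)).edgeSet :=
    Set.disjoint_left.mpr fun e he he' =>
      (mem_edgeSet_reducedGraph.mp he').2 (Set.mem_sym2_iff_forall.mpr he.2)
  have hunion := wsum_union
    (fun e => w e * ((heightSigma G A B n ρ σ e : ℝ) + heightRho G A B n ρ σ e)) hdisj
  rw [← hsplit] at hunion
  rw [IPobj, hunion, Mobj, ← wsum_ite_mem w (mu_subset_edgeSet_reducedGraph _), ← wsum_add]
  congr 1
  · refine wsum_congr fun e he => ?_
    have hin := Set.mem_sym2_iff_forall.mpr he.2
    induction e using Sym2.ind with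
    | _ x y => simp [heightSigma, heightRho, heightDiff, hin, Nat.cast_natAbs]
  · refine wsum_congr fun e he => ?_
    have hout := (mem_edgeSet_reducedGraph.mp he).2
    by_cases hmu : e ∈ mu G (core G (σ + ρ) A B n)
    · have hc : ((σ e : ℕ) : ℝ) + ρ e = cutCost G (σ + ρ) (core G (σ + ρ) A B n) e + 1 := by
        exact_mod_cast (cutCost_add_one hmu).symm
      simp only [heightSigma, heightRho, hout, if_false, hc, Rat.cast_natCast, hmu, if_true]
      ring
    · simp [heightSigma, heightRho, cutCost, hout, hmu]

end Objective

end RTN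

open RTN in
/-- There is a subgraph `G' = (V',E')` (with `E'` the edges of `G` lying
inside `V'`), `A, B ⊆ V'`, an optimal solution `(ρ,σ)` of the integer program `I`, and a
function `k : V' → ℤ` with `0 ≤ k ≤ 2(n-1)`, `k ≡ 0` on `A`, `k ≡ 2(n-1)` on `B`, such
that `σ(e) = |k(x)-k(y)|` and `ρ(e) = 0` on `E'`; and the optimal value `M` of the
`ℓ`-intersecting cut problem (`ℓ = 2(n-1)`) on the complementary reduced graph `G^c` with
boundary sets `Γ_k = {x ∈ (AB)' : k(x) = k}` and `C` satisfies
`I ≥ M + w(μ(V')) + Σ_{e={x,y}∈E'} w(e)|k(x)-k(y)|`. -/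
theorem subgraph_structure_of_optimal_solution {V : Type*} [Fintype V]
    (G : SimpleGraph V) (w : Sym2 V → ℝ) (hw : ∀ e, 0 ≤ w e)
    (A B C : Set V) (hbdy : RTN.Bdy A B C) {n : ℕ} (hn : 2 ≤ n) :
    ∃ (V' : Set V) (ρ σ : Sym2 V → ℕ) (kf : V → ℤ),
      A ⊆ V' ∧ B ⊆ V' ∧
      RTN.IPfeas G A B C n ρ σ ∧ RTN.IPobj G w ρ σ = RTN.Ival G w A B C n ∧
      (∀ x ∈ V', 0 ≤ kf x ∧ kf x ≤ 2 * ((n : ℤ) - 1)) ∧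
      (∀ x ∈ A, kf x = 0) ∧ (∀ x ∈ B, kf x = 2 * ((n : ℤ) - 1)) ∧
      (∀ x y : V, G.Adj x y → x ∈ V' → y ∈ V' →
        (σ s(x, y) : ℤ) = |kf x - kf y| ∧ ρ s(x, y) = 0) ∧
      RTN.Ival G w A B C n ≥
        RTN.Mval (RTN.reducedGraph G V') w
          (fun k => {x | x ∈ V' ∧ (∃ y, G.Adj x y ∧ y ∉ V') ∧ kf x = (k : ℤ)})
          (2 * (n - 1)) C
        + RTN.wsum w (RTN.mu G V')
        + RTN.wsum
            (fun e => w e *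
              Sym2.lift ⟨fun x y => |(kf x : ℝ) - (kf y : ℝ)|,
                fun x y => abs_sub_comm _ _⟩ e)
            {e | e ∈ G.edgeSet ∧ ∀ v ∈ e, v ∈ V'} := by
  obtain ⟨ρ, σ, hIP, hopt⟩ := exists_IPobj_eq_Ival (G := G) (n := n) hw hbdy
  have hIP' := hIP.heightSolution (by omega)
  have hopt' := le_antisymm (hopt ▸ IPobj_heightSolution_le hw) (Ival_le_IPobj hw hIP')
  have hM := Mval_le_Mobj hw (hIP.mfeas_cutCost (by omega)
    (Γ := fun k => {x | x ∈ core G (σ + ρ) A B n ∧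
      (∃ y, G.Adj x y ∧ y ∉ core G (σ + ρ) A B n) ∧ (height G (σ + ρ) A n x : ℤ) = k})
    fun k x hx => ⟨hx.1, by exact_mod_cast hx.2.2⟩)
  refine ⟨core G (σ + ρ) A B n, heightRho G A B n ρ σ, heightSigma G A B n ρ σ,
    fun x => height G (σ + ρ) A n x, left_subset_core, right_subset_core, hIP', hopt',
    fun x _ => ⟨by positivity, by
      have := height_le (G := G) (c := σ + ρ) (A := A) (n := n) x; dsimp only; omega⟩,
    fun x hx => by simp [height_of_mem hx],
    fun x hx => by simp only [hIP.isEvenSeparating.height_of_mem_right hx]; push_cast; omega,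
    fun x y _ hx hy => ?_, ?_⟩
  · have hxy : s(x, y) ∈ (core G (σ + ρ) A B n).sym2 := ⟨hx, hy⟩
    simp [heightSigma, heightRho, heightDiff, hxy]
  · rw [← hopt', IPobj_heightSolution]
    linarith
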